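/- Let w and w' be double occurrence words with disjoint symbol sets. If w is coprime to w', then w' is coprime to w; that is, if all concatenations uv with u a vertex of G_w and v a vertex of G_{w'} are pairwise inequivalent, then all concatenations vu with v a vertex of G_{w'} and u a vertex of G_w are pairwise inequivalent. -/

import Mathlib

/-- A double occurrence word: every symbol occurs zero or exactly two times. -/
def IsDOW (w : List ℕ) : Prop := ∀ x : ℕ, w.count x = 0 ∨ w.count x = 2

/-- `u` is a repeat factor of `w`: `u` is a nonempty single occurrence word and
`w = x u y u z`. -/
def IsRepeatFactor (u w : List ℕ) : Prop :=
  u ≠ [] ∧ u.Nodup ∧ ∃ x y z : List ℕ, w = x ++ u ++ y ++ u ++ z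

/-- `u` is a return factor of `w`: `u` is a nonempty single occurrence word and
`w = x u y u^R z`. -/
def IsReturnFactor (u w : List ℕ) : Prop :=
  u ≠ [] ∧ u.Nodup ∧ ∃ x y z : List ℕ, w = x ++ u ++ y ++ u.reverse ++ z

/-- `u` is a repeat or return factor of `w`. -/
def IsRRFactor (u w : List ℕ) : Prop := IsRepeatFactor u w ∨ IsReturnFactor u w

/-- `u` is a maximal repeat or return factor of `w`: no repeat or return factor of `w`
containing `u` as a contiguous factor is strictly longer. `M^SOW_w = {u | IsMaximalRR u w}`. -/
def IsMaximalRR (u w : List ℕ) : Prop :=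
  IsRRFactor u w ∧ ∀ v : List ℕ, IsRRFactor v w → u <:+: v → v.length ≤ u.length

/-- Ascending-order equivalence: `w ~ w'` iff `w' = map f w` for a bijection `f`
of the alphabet. -/
def AOEquiv (w w' : List ℕ) : Prop := ∃ f : ℕ ≃ ℕ, w' = w.map f

instance aoSetoid : Setoid (List ℕ) where
  r := AOEquiv
  iseqv := by
    refine ⟨fun w => ⟨Equiv.refl ℕ, by simp⟩, ?_, ?_⟩
    · rintro w w' ⟨f, rfl⟩
      exact ⟨f.symm, by simp [List.map_map]⟩
    · rintro a b c ⟨f, rfl⟩ ⟨g, rfl⟩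
      exact ⟨f.trans g, by simp [List.map_map]⟩

/-- Ascending-order equivalence classes of words. -/
abbrev WordClass : Type := Quotient aoSetoid

/-- `v` is an immediate successor of `w` (i.e. `v ∈ D(w)`): `v` is ascending-order
equivalent to `d_u(w)` for some maximal repeat or return factor `u` of `w`. -/
def ImmSucc (w v : List ℕ) : Prop :=
  ∃ u x y z : List ℕ, IsMaximalRR u w ∧
    (w = x ++ u ++ y ++ u ++ z ∨ w = x ++ u ++ y ++ u.reverse ++ z) ∧
    AOEquiv (x ++ y ++ z) v

/-- `v` is a successor of `w` (allowing `v = w`). -/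
def Successor (w v : List ℕ) : Prop := Relation.ReflTransGen ImmSucc w v

/-- The vertices of the word graph `G_w`: ascending-order equivalence classes of `w`
and all of its successors. -/
def WGVertex (w : List ℕ) : Type :=
  { c : WordClass // ∃ v : List ℕ, Successor w v ∧ Quotient.mk aoSetoid v = c }

/-- Adjacency between word classes: an edge from the class of `a` to the class of `b`
iff `b ∈ D(a)`. -/
def ClassAdj (c c' : WordClass) : Prop :=
  ∃ a b : List ℕ, Quotient.mk aoSetoid a = c ∧ Quotient.mk aoSetoid b = c' ∧ ImmSucc a b

/-- The adjacency relation of the word graph `G_w`. -/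
def WGAdj (w : List ℕ) (c c' : WGVertex w) : Prop := ClassAdj c.1 c'.1

/-- `w` is coprime to `w'`: all concatenations `uv` of a vertex of `G_w` with a vertex of
`G_{w'}` are pairwise inequivalent. -/
def CoprimeDOW (w w' : List ℕ) : Prop :=
  ∀ u u' v v' : List ℕ, Successor w u → Successor w u' → Successor w' v → Successor w' v' →
    AOEquiv (u ++ v) (u' ++ v') → (AOEquiv u u' ∧ AOEquiv v v')

lemma append_eq_split {a b c d : List ℕ} (h : a ++ b = c ++ d) (hl : c.length ≤ a.length) :
    ∃ e, a = c ++ e ∧ d = e ++ b := by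
  rcases List.append_eq_append_iff.mp h with ⟨e, he1, he2⟩ | ⟨e, he1, he2⟩
  · have : e = [] := by
      have := congrArg List.length he1
      simp at this
      exact List.eq_nil_of_length_eq_zero (by omega)
    subst this
    exact ⟨[], by simpa using he1.symm, by simpa using he2.symm⟩
  · exact ⟨e, he1, he2⟩

lemma IsDOW_map (f : ℕ ≃ ℕ) {w : List ℕ} (hw : IsDOW w) : IsDOW (w.map f) := by
  intro x
  have : (f : ℕ → ℕ) (f.symm x) = x := f.apply_symm_apply x
  rw [← this, List.count_map_of_injective _ _ f.injective]
  exact hw _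

lemma IsDOW_of_AOEquiv {w v : List ℕ} (h : ∃ f : ℕ ≃ ℕ, v = w.map f) (hw : IsDOW w) :
    IsDOW v := by
  obtain ⟨f, rfl⟩ := h
  exact IsDOW_map f hw

lemma del_DOW {x u y u' z : List ℕ} (hnd : u.Nodup) (hu' : u' = u ∨ u' = u.reverse)
    (hw : IsDOW (x ++ u ++ y ++ u' ++ z)) : IsDOW (x ++ y ++ z) := by
  intro s
  have hcnt := hw s
  have hu'c : u'.count s = u.count s := by
    rcases hu' with rfl | rfl
    · rfl
    · exact List.count_reverse
  simp only [List.count_append, hu'c] at hcnt ⊢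
  by_cases hs : s ∈ u
  · have := List.count_eq_one_of_mem hnd hs
    omega
  · have := List.count_eq_zero_of_not_mem hs
    omega

lemma split_DOW {A B : List ℕ} (hAB : IsDOW (A ++ B)) (hA : IsDOW A) :
    IsDOW B ∧ (∀ s ∈ A, s ∉ B) ∧ (∀ s ∈ B, s ∉ A) := by
  have key : ∀ s : ℕ, (B.count s = 0 ∨ B.count s = 2) ∧ ¬(s ∈ A ∧ s ∈ B) := by
    intro s
    have h1 := hAB s
    have h2 := hA s
    simp only [List.count_append] at h1
    constructor
    · omega
    · rintro ⟨hsA, hsB⟩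
      have hA1 : 0 < A.count s := List.count_pos_iff.mpr hsA
      have hB1 : 0 < B.count s := List.count_pos_iff.mpr hsB
      omega
  exact ⟨fun s => (key s).1, fun s hsA hsB => (key s).2 ⟨hsA, hsB⟩,
    fun s hsB hsA => (key s).2 ⟨hsA, hsB⟩⟩

lemma RR_length_le {u w : List ℕ} (h : IsRRFactor u w) : u.length ≤ w.length := by
  rcases h with ⟨_, _, x, y, z, rfl⟩ | ⟨_, _, x, y, z, rfl⟩ <;> simp <;> omega

lemma RR_ne_nil {u w : List ℕ} (h : IsRRFactor u w) : u ≠ [] := by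
  rcases h with ⟨h, _⟩ | ⟨h, _⟩ <;> exact h

lemma exists_RR {w : List ℕ} (hw : IsDOW w) (hne : w ≠ []) : ∃ u, IsRRFactor u w := by
  obtain ⟨s, hs⟩ := List.exists_mem_of_ne_nil w hne
  have hc : w.count s = 2 := by
    have := hw s
    have : 0 < w.count s := List.count_pos_iff.mpr hs
    omega
  obtain ⟨p, q, rfl⟩ := List.append_of_mem hs
  have hcnt : p.count s + q.count s = 1 := by
    have := hc
    simp [List.count_append, List.count_cons] at this
    omega
  have hnd : ([s] : List ℕ).Nodup := by simp
  by_cases hq : s ∈ q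
  · obtain ⟨p₂, q₂, rfl⟩ := List.append_of_mem hq
    refine ⟨[s], Or.inl ⟨by simp, hnd, p, p₂, q₂, ?_⟩⟩
    simp
  · have hp : s ∈ p := by
      have := List.count_eq_zero_of_not_mem hq
      have : 0 < p.count s := by omega
      exact List.count_pos_iff.mp this
    obtain ⟨p₁, p₂, rfl⟩ := List.append_of_mem hp
    refine ⟨[s], Or.inl ⟨by simp, hnd, p₁, p₂, q, ?_⟩⟩
    simp

lemma exists_longest_RR {w : List ℕ} (hw : IsDOW w) (hne : w ≠ []) :
    ∃ u, IsRRFactor u w ∧ ∀ v, IsRRFactor v w → v.length ≤ u.length := by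
  classical
  obtain ⟨u0, hu0⟩ := exists_RR hw hne
  set P : ℕ → Prop := fun n => ∃ u, IsRRFactor u w ∧ u.length = n with hP
  have hspec : P (Nat.findGreatest P w.length) :=
    Nat.findGreatest_spec (RR_length_le hu0) ⟨u0, hu0, rfl⟩
  obtain ⟨u, huRR, hlen⟩ := hspec
  refine ⟨u, huRR, fun v hv => ?_⟩
  rw [hlen]
  exact Nat.le_findGreatest (RR_length_le hv) ⟨v, hv, rfl⟩

lemma noStraddle {A B t t' : List ℕ} (hd : ∀ s ∈ A, s ∉ B)
    (x y z : List ℕ) (ht' : t' = t ∨ t' = t.reverse) (hne : t ≠ [])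
    (heq : A ++ B = x ++ t ++ y ++ t' ++ z) :
    (∃ x₁ z₁, A = x₁ ++ t ++ y ++ t' ++ z₁) ∨ (∃ x₁ z₁, B = x₁ ++ t ++ y ++ t' ++ z₁) := by
  have ht'mem : ∀ s, s ∈ t' → s ∈ t := by
    intro s hs
    rcases ht' with rfl | rfl
    · exact hs
    · exact List.mem_reverse.mp hs
  by_cases hc1 : A.length ≤ x.length
  · -- factor entirely inside B
    have h : x ++ (t ++ y ++ t' ++ z) = A ++ B := by
      simpa [List.append_assoc] using heq.symm
    obtain ⟨x₁, hx, hB⟩ := append_eq_split h hc1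
    right
    exact ⟨x₁, z, by rw [hB]; simp [List.append_assoc]⟩
  · by_cases hc2 : x.length + t.length + y.length + t'.length ≤ A.length
    · -- factor entirely inside A
      have h : A ++ B = (x ++ t ++ y ++ t') ++ z := by rw [heq]
      obtain ⟨e, hA, hz⟩ := append_eq_split h (by simp only [List.length_append]; try omega)
      left
      exact ⟨x, e, hA⟩
    · exfalso
      push_neg at hc1 hc2
      have h1 : A ++ B = x ++ (t ++ y ++ t' ++ z) := by
        rw [heq]; simp [List.append_assoc]
      obtain ⟨e, hA, hrest⟩ := append_eq_split h1 (le_of_lt hc1)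
      have hlenA : A.length = x.length + e.length := by
        have := congrArg List.length hA; simpa using this
      have hene : e ≠ [] := by
        intro h; subst h; simp at hlenA; omega
      by_cases hc3 : e.length ≤ t.length
      · -- boundary inside the first copy of t
        have h2 : t ++ (y ++ t' ++ z) = e ++ B := by
          rw [← hrest]; simp [List.append_assoc]
        obtain ⟨e₂, ht2, hB⟩ := append_eq_split h2 hc3
        obtain ⟨s, hs⟩ := List.exists_mem_of_ne_nil e hene
        have hsA : s ∈ A := by rw [hA]; exact List.mem_append_right x hs
        have hst : s ∈ t := by rw [ht2]; exact List.mem_append_left e₂ hs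
        have hst' : s ∈ t' := by
          rcases ht' with rfl | rfl
          · exact hst
          · exact List.mem_reverse.mpr hst
        have hsB : s ∈ B := by
          rw [hB]
          refine List.mem_append_right e₂ ?_
          exact List.mem_append_left z (List.mem_append_right y hst')
        exact hd s hsA hsB
      · push_neg at hc3
        have h3 : e ++ B = t ++ (y ++ t' ++ z) := by
          simpa [List.append_assoc] using hrest.symm
        obtain ⟨e₃, he3, hyz⟩ := append_eq_split h3 (le_of_lt hc3)
        have hlene : e.length = t.length + e₃.length := by
          have := congrArg List.length he3; simpa using this
        by_cases hc4 : e₃.length ≤ y.length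
        · -- boundary inside y : second copy fully in B, first copy fully in A
          have h4 : y ++ (t' ++ z) = e₃ ++ B := by
            rw [← hyz]; simp [List.append_assoc]
          obtain ⟨y₂, hy2, hB⟩ := append_eq_split h4 hc4
          obtain ⟨s, hs⟩ := List.exists_mem_of_ne_nil t hne
          have hsA : s ∈ A := by
            rw [hA, he3]
            exact List.mem_append_right x (List.mem_append_left e₃ hs)
          have hst' : s ∈ t' := by
            rcases ht' with rfl | rfl
            · exact hs
            · exact List.mem_reverse.mpr hs
          have hsB : s ∈ B := by
            rw [hB]
            exact List.mem_append_right y₂ (List.mem_append_left z hst')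
          exact hd s hsA hsB
        · push_neg at hc4
          have h5 : e₃ ++ B = y ++ (t' ++ z) := by
            simpa [List.append_assoc] using hyz.symm
          obtain ⟨e₄, he4, htz⟩ := append_eq_split h5 (le_of_lt hc4)
          have hlene3 : e₃.length = y.length + e₄.length := by
            have := congrArg List.length he4; simpa using this
          have hc5 : e₄.length < t'.length := by omega
          have h6 : t' ++ z = e₄ ++ B := by rw [← htz]
          obtain ⟨e₅, he5, hB⟩ := append_eq_split h6 (le_of_lt hc5)
          have hlene5 : t'.length = e₄.length + e₅.length := by
            have := congrArg List.length he5; simpa using this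
          have he5ne : e₅ ≠ [] := by
            intro h; subst h; simp at hlene5; omega
          obtain ⟨s, hs⟩ := List.exists_mem_of_ne_nil e₅ he5ne
          have hst' : s ∈ t' := by rw [he5]; exact List.mem_append_right e₄ hs
          have hst : s ∈ t := ht'mem s hst'
          have hsA : s ∈ A := by
            rw [hA, he3]
            exact List.mem_append_right x (List.mem_append_left e₃ hst)
          have hsB : s ∈ B := by rw [hB]; exact List.mem_append_left z hs
          exact hd s hsA hsB

lemma RR_mem {v X : List ℕ} (h : IsRRFactor v X) : ∀ s ∈ v, s ∈ X := by
  rcases h with ⟨_, _, x, y, z, rfl⟩ | ⟨_, _, x, y, z, rfl⟩ <;> intro s hs <;>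
    · simp only [List.mem_append]
      tauto

lemma RR_of_append {A B v : List ℕ} (hd : ∀ s ∈ A, s ∉ B) (hv : IsRRFactor v (A ++ B)) :
    IsRRFactor v A ∨ IsRRFactor v B := by
  rcases hv with ⟨hne, hnd, x, y, z, heq⟩ | ⟨hne, hnd, x, y, z, heq⟩
  · rcases noStraddle hd x y z (Or.inl rfl) hne heq with ⟨x₁, z₁, h⟩ | ⟨x₁, z₁, h⟩
    · exact Or.inl (Or.inl ⟨hne, hnd, x₁, y, z₁, h⟩)
    · exact Or.inr (Or.inl ⟨hne, hnd, x₁, y, z₁, h⟩)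
  · rcases noStraddle hd x y z (Or.inr rfl) hne heq with ⟨x₁, z₁, h⟩ | ⟨x₁, z₁, h⟩
    · exact Or.inl (Or.inr ⟨hne, hnd, x₁, y, z₁, h⟩)
    · exact Or.inr (Or.inr ⟨hne, hnd, x₁, y, z₁, h⟩)

lemma succ_step_right {A B x y z m m' : List ℕ} (hm' : m' = m ∨ m' = m.reverse)
    (hdec : A = x ++ m ++ y ++ m' ++ z) (hnd : m.Nodup) (hmne : m ≠ [])
    (hmax : ∀ v, IsRRFactor v A → v.length ≤ m.length)
    (hd : ∀ s ∈ A, s ∉ B) :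
    ImmSucc (A ++ B) ((x ++ y ++ z) ++ B) := by
  obtain ⟨s₀, hs₀⟩ := List.exists_mem_of_ne_nil m hmne
  have hs₀A : s₀ ∈ A := by
    rw [hdec]; simp only [List.mem_append]; tauto
  refine ⟨m, x, y, z ++ B, ⟨?_, ?_⟩, ?_, ?_⟩
  · rcases hm' with rfl | rfl
    · exact Or.inl ⟨hmne, hnd, x, y, z ++ B, by rw [hdec]; simp [List.append_assoc]⟩
    · exact Or.inr ⟨hmne, hnd, x, y, z ++ B, by rw [hdec]; simp [List.append_assoc]⟩
  · intro v hv hinf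
    rcases RR_of_append hd hv with h | h
    · exact hmax v h
    · exact absurd (RR_mem h s₀ (hinf.subset hs₀)) (hd s₀ hs₀A)
  · rcases hm' with rfl | rfl
    · left; rw [hdec]; simp [List.append_assoc]
    · right; rw [hdec]; simp [List.append_assoc]
  · exact ⟨Equiv.refl ℕ, by simp [List.append_assoc]⟩

lemma succ_step_left {A B x y z m m' : List ℕ} (hm' : m' = m ∨ m' = m.reverse)
    (hdec : B = x ++ m ++ y ++ m' ++ z) (hnd : m.Nodup) (hmne : m ≠ [])
    (hmax : ∀ v, IsRRFactor v B → v.length ≤ m.length)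
    (hd : ∀ s ∈ A, s ∉ B) :
    ImmSucc (A ++ B) (A ++ (x ++ y ++ z)) := by
  obtain ⟨s₀, hs₀⟩ := List.exists_mem_of_ne_nil m hmne
  have hs₀B : s₀ ∈ B := by
    rw [hdec]; simp only [List.mem_append]; tauto
  refine ⟨m, A ++ x, y, z, ⟨?_, ?_⟩, ?_, ?_⟩
  · rcases hm' with rfl | rfl
    · exact Or.inl ⟨hmne, hnd, A ++ x, y, z, by rw [hdec]; simp [List.append_assoc]⟩
    · exact Or.inr ⟨hmne, hnd, A ++ x, y, z, by rw [hdec]; simp [List.append_assoc]⟩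
  · intro v hv hinf
    rcases RR_of_append hd hv with h | h
    · exact absurd hs₀B (hd s₀ (RR_mem h s₀ (hinf.subset hs₀)))
    · exact hmax v h
  · rcases hm' with rfl | rfl
    · left; rw [hdec]; simp [List.append_assoc]
    · right; rw [hdec]; simp [List.append_assoc]
  · exact ⟨Equiv.refl ℕ, by simp [List.append_assoc]⟩

lemma succ_append_right_aux : ∀ (n : ℕ) (A B : List ℕ), A.length ≤ n → IsDOW A → IsDOW B →
    (∀ s ∈ A, s ∉ B) → Successor (A ++ B) B := by
  intro n
  induction n with
  | zero =>
    intro A B hlen _ _ _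
    have : A = [] := List.eq_nil_of_length_eq_zero (by omega)
    subst this
    exact Relation.ReflTransGen.refl
  | succ n ih =>
    intro A B hlen hA hB hd
    rcases eq_or_ne A [] with rfl | hne
    · exact Relation.ReflTransGen.refl
    obtain ⟨m, hmRR, hmax⟩ := exists_longest_RR hA hne
    have hmne : m ≠ [] := RR_ne_nil hmRR
    have hmlen : 0 < m.length := List.length_pos_iff.mpr hmne
    have hkey : ∀ (m' x y z : List ℕ), (m' = m ∨ m' = m.reverse) →
        A = x ++ m ++ y ++ m' ++ z → Successor (A ++ B) B := by
      intro m' x y z hm' hdec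
      have hnd : m.Nodup := by
        rcases hmRR with ⟨_, h, _⟩ | ⟨_, h, _⟩ <;> exact h
      have hstep := succ_step_right hm' hdec hnd hmne hmax hd
      have hlenA : A.length = x.length + m.length + y.length + m.length + z.length := by
        have h1 := congrArg List.length hdec
        have h2 : m'.length = m.length := by rcases hm' with rfl | rfl <;> simp
        simp [h2] at h1
        omega
      have hA' : IsDOW (x ++ y ++ z) := del_DOW hnd hm' (hdec ▸ hA)
      have hd' : ∀ s ∈ x ++ y ++ z, s ∉ B := by
        intro s hs
        apply hd
        rw [hdec]; simp only [List.mem_append] at hs ⊢; tauto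
      have hrec : Successor ((x ++ y ++ z) ++ B) B := by
        apply ih (x ++ y ++ z) B _ hA' hB hd'
        simp only [List.length_append]
        omega
      exact Relation.ReflTransGen.head hstep hrec
    rcases hmRR with ⟨_, _, x, y, z, hdec⟩ | ⟨_, _, x, y, z, hdec⟩
    · exact hkey m x y z (Or.inl rfl) hdec
    · exact hkey m.reverse x y z (Or.inr rfl) hdec

lemma succ_append_left_aux : ∀ (n : ℕ) (A B : List ℕ), B.length ≤ n → IsDOW A → IsDOW B →
    (∀ s ∈ A, s ∉ B) → Successor (A ++ B) A := by
  intro n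
  induction n with
  | zero =>
    intro A B hlen _ _ _
    have : B = [] := List.eq_nil_of_length_eq_zero (by omega)
    subst this
    rw [List.append_nil]; exact Relation.ReflTransGen.refl
  | succ n ih =>
    intro A B hlen hA hB hd
    rcases eq_or_ne B [] with rfl | hne
    · rw [List.append_nil]; exact Relation.ReflTransGen.refl
    obtain ⟨m, hmRR, hmax⟩ := exists_longest_RR hB hne
    have hmne : m ≠ [] := RR_ne_nil hmRR
    have hmlen : 0 < m.length := List.length_pos_iff.mpr hmne
    have hkey : ∀ (m' x y z : List ℕ), (m' = m ∨ m' = m.reverse) →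
        B = x ++ m ++ y ++ m' ++ z → Successor (A ++ B) A := by
      intro m' x y z hm' hdec
      have hnd : m.Nodup := by
        rcases hmRR with ⟨_, h, _⟩ | ⟨_, h, _⟩ <;> exact h
      have hstep := succ_step_left hm' hdec hnd hmne hmax hd
      have hlenB : B.length = x.length + m.length + y.length + m.length + z.length := by
        have h1 := congrArg List.length hdec
        have h2 : m'.length = m.length := by rcases hm' with rfl | rfl <;> simp
        simp [h2] at h1
        omega
      have hB' : IsDOW (x ++ y ++ z) := del_DOW hnd hm' (hdec ▸ hB)
      have hd' : ∀ s ∈ A, s ∉ x ++ y ++ z := by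
        intro s hs hmem
        apply hd s hs
        rw [hdec]; simp only [List.mem_append] at hmem ⊢; tauto
      have hrec : Successor (A ++ (x ++ y ++ z)) A := by
        apply ih A (x ++ y ++ z) _ hA hB' hd'
        simp only [List.length_append]
        omega
      exact Relation.ReflTransGen.head hstep hrec
    rcases hmRR with ⟨_, _, x, y, z, hdec⟩ | ⟨_, _, x, y, z, hdec⟩
    · exact hkey m x y z (Or.inl rfl) hdec
    · exact hkey m.reverse x y z (Or.inr rfl) hdec

lemma succ_append_right' {A B : List ℕ} (hA : IsDOW A) (hB : IsDOW B)
    (hd : ∀ s ∈ A, s ∉ B) : Successor (A ++ B) B :=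
  succ_append_right_aux A.length A B le_rfl hA hB hd

lemma succ_append_left' {A B : List ℕ} (hA : IsDOW A) (hB : IsDOW B)
    (hd : ∀ s ∈ A, s ∉ B) : Successor (A ++ B) A :=
  succ_append_left_aux B.length A B le_rfl hA hB hd

lemma succ_nil {w : List ℕ} (hw : IsDOW w) : Successor w [] := by
  have h := succ_append_right' hw (B := []) (by intro x; simp) (by simp)
  simpa using h

lemma ImmSucc_DOW {a b : List ℕ} (h : ImmSucc a b) (ha : IsDOW a) : IsDOW b := by
  obtain ⟨u, x, y, z, ⟨hRR, _⟩, hdec, hao⟩ := h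
  have hnd : u.Nodup := by rcases hRR with ⟨_, h, _⟩ | ⟨_, h, _⟩ <;> exact h
  have hdel : IsDOW (x ++ y ++ z) := by
    rcases hdec with rfl | rfl
    · exact del_DOW hnd (Or.inl rfl) ha
    · exact del_DOW hnd (Or.inr rfl) ha
  exact IsDOW_of_AOEquiv hao hdel

lemma succ_DOW {w v : List ℕ} (hw : IsDOW w) (h : Successor w v) : IsDOW v := by
  induction h with
  | refl => exact hw
  | tail _ h2 ih => exact ImmSucc_DOW h2 ih

lemma disj_map {A B : List ℕ} (g : ℕ ≃ ℕ) (hd : ∀ s ∈ A, s ∉ B) :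
    ∀ s ∈ A.map g, s ∉ B.map g := by
  intro s hs hs'
  simp only [List.mem_map] at hs hs'
  obtain ⟨a, ha, rfl⟩ := hs
  obtain ⟨b, hb, hab⟩ := hs'
  have : b = a := g.injective hab
  subst this
  exact hd b ha hb


/-- coprimality of DOWs (with disjoint symbol sets) is symmetric. -/
theorem coprime_symm (w w' : List ℕ) (hw : IsDOW w) (hw' : IsDOW w')
    (hdisj : ∀ x : ℕ, x ∈ w → x ∉ w') (hcop : CoprimeDOW w w') :
    CoprimeDOW w' w := by
  intro u u' v v' hu hu' hv hv' hAO
  obtain ⟨f, hf⟩ := hAO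
  rw [List.map_append] at hf
  have hud : IsDOW u := succ_DOW hw' hu
  have hu'd : IsDOW u' := succ_DOW hw' hu'
  have hvd : IsDOW v := succ_DOW hw hv
  have hv'd : IsDOW v' := succ_DOW hw hv'
  rcases List.append_eq_append_iff.mp hf with ⟨C, hC1, hC2⟩ | ⟨C, hC1, hC2⟩
  · -- hC1 : u.map f = u' ++ C, hC2 : v' = C ++ v.map f
    obtain ⟨hCd, hd1, hd1'⟩ := split_DOW (hC1 ▸ IsDOW_map f hud) hu'd
    have hueq : u = u'.map f.symm ++ C.map f.symm := by
      rw [← List.map_append, ← hC1, List.map_map]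
      simp
    have hsu : Successor u (C.map f.symm) := by
      rw [hueq]
      exact succ_append_right' (IsDOW_map f.symm hu'd) (IsDOW_map f.symm hCd)
        (disj_map f.symm hd1)
    have hsw'C : Successor w' (C.map f.symm) := hu.trans hsu
    obtain ⟨_, hd2, _⟩ := split_DOW (hC2 ▸ hv'd) hCd
    have hsv' : Successor v' C := by
      rw [hC2]
      exact succ_append_left' hCd (IsDOW_map f hvd) hd2
    have hswC : Successor w C := hv'.trans hsv'
    have hinst := hcop C [] [] (C.map f.symm) hswC (succ_nil hw) (succ_nil hw') hsw'C
      ⟨f.symm, by simp⟩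
    obtain ⟨⟨g, hg⟩, _⟩ := hinst
    have hCnil : C = [] := by simpa using hg.symm
    subst hCnil
    simp only [List.append_nil, List.nil_append] at hC1 hC2
    exact ⟨⟨f, hC1.symm⟩, ⟨f, hC2⟩⟩
  · -- hC1 : u' = u.map f ++ C, hC2 : v.map f = C ++ v'
    obtain ⟨hCd, hd1, hd1'⟩ := split_DOW (hC1 ▸ hu'd) (IsDOW_map f hud)
    have hsu' : Successor u' C := by
      rw [hC1]
      exact succ_append_right' (IsDOW_map f hud) hCd hd1
    have hsw'C : Successor w' C := hu'.trans hsu'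
    obtain ⟨hv'd2, hd2, _⟩ := split_DOW (hC2 ▸ IsDOW_map f hvd) hCd
    have hveq : v = C.map f.symm ++ v'.map f.symm := by
      rw [← List.map_append, ← hC2, List.map_map]
      simp
    have hsv : Successor v (C.map f.symm) := by
      rw [hveq]
      exact succ_append_left' (IsDOW_map f.symm hCd) (IsDOW_map f.symm hv'd)
        (disj_map f.symm hd2)
    have hswC : Successor w (C.map f.symm) := hv.trans hsv
    have hinst := hcop (C.map f.symm) [] [] C hswC (succ_nil hw) (succ_nil hw') hsw'C
      ⟨f, by simp [List.map_map]⟩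
    obtain ⟨⟨g, hg⟩, _⟩ := hinst
    have hCnil : C = [] := by
      have h1 : C.map f.symm = [] := by simpa using hg.symm
      simpa using congrArg (List.map f) h1
    subst hCnil
    simp only [List.append_nil, List.nil_append] at hC1 hC2
    exact ⟨⟨f, hC1⟩, ⟨f, hC2.symm⟩⟩
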